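/- The OR recourse function is superadditive under concatenation: for all paths p1 and p2 on disjoint sets of customers whose concatenation p = (p1, p2) is a path, Q̄^OR_{p} ≥ Q̄^OR_{p1} + Q̄^OR_{p2}, and consequently Q^OR_{p} ≥ Q^OR_{p1} + Q^OR_{p2}. -/

import Mathlib

open ENNReal

/-- `Ψ(s, q) = max(⌈(s − q)/Q⌉, 0)`: the number of restocking trips needed to serve a
demand of `s` units from residual capacity `q`, with vehicle capacity `Q`. -/
noncomputable def psi (Q s q : ℕ) : ℕ := (⌈((s : ℚ) - (q : ℚ)) / (Q : ℚ)⌉).toNat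

/-- The optimal-restocking (OR) expected cost-to-go `F(i, L, q)`. -/
noncomputable def orF {N : Type*} (ρ : N → PMF ℕ) (Q : ℕ) (cF : N → ℝ) (cP : N → N → ℝ) :
    N → List N → ℕ → ℝ≥0∞
  | _, [], _ => 0
  | i, j :: L', q =>
    min
      (∑' s : ℕ, (ENNReal.ofReal (cF j) * (psi Q s q : ℝ≥0∞)
          + orF ρ Q cF cP j L' (psi Q s q * Q + q - s)) * ρ j s)
      (ENNReal.ofReal (cP i j) +
        ∑' s : ℕ, (ENNReal.ofReal (cF j) * (psi Q s Q : ℝ≥0∞)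
          + orF ρ Q cF cP j L' (psi Q s Q * Q + Q - s)) * ρ j s)

/-- The OR cost-to-go `H(j :: L', q)` of proceeding directly to customer `j`. -/
noncomputable def orH {N : Type*} (ρ : N → PMF ℕ) (Q : ℕ) (cF : N → ℝ) (cP : N → N → ℝ)
    (j : N) (L' : List N) (q : ℕ) : ℝ≥0∞ :=
  ∑' s : ℕ, (ENNReal.ofReal (cF j) * (psi Q s q : ℝ≥0∞)
      + orF ρ Q cF cP j L' (psi Q s q * Q + q - s)) * ρ j s

/-- `Q̄ᴼᴿ_p = H(p, Q)`: the OR recourse cost of the route `(0, p, 0)` along `p`. -/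
noncomputable def QbarOR {N : Type*} (ρ : N → PMF ℕ) (Q : ℕ) (cF : N → ℝ)
    (cP : N → N → ℝ) : List N → ℝ≥0∞
  | [] => 0
  | j :: L' => orH ρ Q cF cP j L' Q

/-- `Qᴼᴿ_p`: the OR recourse cost of the route `(0, p, 0)` in its best orientation. -/
noncomputable def QOR {N : Type*} (ρ : N → PMF ℕ) (Q : ℕ) (cF : N → ℝ)
    (cP : N → N → ℝ) (p : List N) : ℝ≥0∞ :=
  min (QbarOR ρ Q cF cP p) (QbarOR ρ Q cF cP p.reverse)

lemma psi_anti {Q : ℕ} {s a b : ℕ} (h : a ≤ b) : psi Q s b ≤ psi Q s a := by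
  unfold psi
  have hle : ((s:ℚ) - b) / Q ≤ ((s:ℚ) - a) / Q := by gcongr
  have := Int.ceil_le_ceil hle
  omega

lemma psi_step {Q : ℕ} (hQ : 1 ≤ Q) {s a b : ℕ} (h2 : b ≤ a + Q) :
    psi Q s a ≤ psi Q s b + 1 := by
  unfold psi
  have hQ0 : (0:ℚ) < Q := by exact_mod_cast hQ
  have hle : ((s:ℚ) - a) / Q ≤ ((s:ℚ) - b) / Q + 1 := by
    rw [div_add' _ _ _ (ne_of_gt hQ0), div_le_div_iff₀ hQ0 hQ0]
    have : (b:ℚ) ≤ a + Q := by exact_mod_cast h2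
    nlinarith
  have := Int.ceil_le_ceil hle
  rw [Int.ceil_add_one] at this
  omega

lemma resid_le {Q : ℕ} (hQ : 1 ≤ Q) {s q : ℕ} (hq : q ≤ Q) :
    psi Q s q * Q + q - s ≤ Q := by
  have hQ0 : (0:ℚ) < Q := by exact_mod_cast hQ
  set c := ⌈((s:ℚ) - q) / Q⌉ with hc
  rcases le_or_gt c 0 with h | h
  · have : psi Q s q = 0 := by unfold psi; omega
    rw [this]; omega
  · have h1 : (c : ℚ) < ((s:ℚ) - q) / Q + 1 := Int.ceil_lt_add_one _
    have h3 : ((s:ℚ) - q) / Q * Q = (s:ℚ) - q := div_mul_cancel₀ _ (ne_of_gt hQ0)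
    have h2 : (c:ℚ) * Q < (s:ℚ) - q + Q := by nlinarith
    have h4 : (c:ℤ) * Q < (s:ℤ) - q + Q := by exact_mod_cast h2
    have hk : ((c.toNat : ℕ) : ℤ) = c := Int.toNat_of_nonneg (le_of_lt h)
    have h5 : ((c.toNat : ℕ) : ℤ) * Q + q < s + Q := by rw [hk]; omega
    have h6 : c.toNat * Q + q < s + Q := by exact_mod_cast h5
    have hp : psi Q s q = c.toNat := rfl
    rw [hp]; omega

lemma orF_cons {N : Type*} (ρ : N → PMF ℕ) (Q : ℕ) (cF : N → ℝ) (cP : N → N → ℝ)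
    (i k : N) (L : List N) (q : ℕ) :
    orF ρ Q cF cP i (k :: L) q =
      min (orH ρ Q cF cP k L q) (ENNReal.ofReal (cP i k) + orH ρ Q cF cP k L Q) := rfl

lemma orH_eq {N : Type*} (ρ : N → PMF ℕ) (Q : ℕ) (cF : N → ℝ) (cP : N → N → ℝ)
    (j : N) (L : List N) (q : ℕ) :
    orH ρ Q cF cP j L q = ∑' s : ℕ, (ENNReal.ofReal (cF j) * (psi Q s q : ℝ≥0∞)
      + orF ρ Q cF cP j L (psi Q s q * Q + q - s)) * ρ j s := rfl

lemma pmf_tsum_add_const (ρ : PMF ℕ) (g : ℕ → ℝ≥0∞) (C : ℝ≥0∞) :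
    ∑' s, (g s + C) * ρ s = (∑' s, g s * ρ s) + C := by
  simp_rw [add_mul]
  rw [ENNReal.tsum_add, ENNReal.tsum_mul_left, ρ.tsum_coe, mul_one]

section
variable {N : Type*} (ρ : N → PMF ℕ) (Q : ℕ) (cF : N → ℝ) (cP : N → N → ℝ)

lemma orH_mono (hQ : 1 ≤ Q)
    (hcPF : ∀ j k, ENNReal.ofReal (cP j k) ≤ ENNReal.ofReal (cF j)) :
    ∀ (L : List N) (j : N) {a b : ℕ}, a ≤ b → b ≤ Q →
      orH ρ Q cF cP j L b ≤ orH ρ Q cF cP j L a := by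
  intro L
  induction L with
  | nil =>
    intro j a b hab hb
    rw [orH_eq, orH_eq]
    refine ENNReal.tsum_le_tsum fun s => mul_le_mul_left ?_ _
    simp only [orF]
    exact add_le_add (mul_le_mul_right (Nat.cast_le.mpr (psi_anti hab)) _) le_rfl
  | cons k L'' ih =>
    intro j a b hab hb
    have ha : a ≤ Q := le_trans hab hb
    -- monotonicity of F in the residual capacity
    have Fmono : ∀ {r r' : ℕ}, r ≤ r' → r' ≤ Q →
        orF ρ Q cF cP j (k :: L'') r' ≤ orF ρ Q cF cP j (k :: L'') r := by
      intro r r' h h'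
      rw [orF_cons, orF_cons]
      exact min_le_min (ih k h h') le_rfl
    -- a failure bound: F anywhere is at most cF j plus F anywhere else (both ≤ Q)
    have Fjump : ∀ {r r' : ℕ}, r' ≤ Q →
        orF ρ Q cF cP j (k :: L'') r ≤
          ENNReal.ofReal (cF j) + orF ρ Q cF cP j (k :: L'') r' := by
      intro r r' h'
      rw [orF_cons, orF_cons]
      have hHQ : orH ρ Q cF cP k L'' Q ≤
          min (orH ρ Q cF cP k L'' r') (ENNReal.ofReal (cP j k) + orH ρ Q cF cP k L'' Q) :=
        le_min (ih k h' le_rfl) le_add_self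
      calc min (orH ρ Q cF cP k L'' r) (ENNReal.ofReal (cP j k) + orH ρ Q cF cP k L'' Q)
          ≤ ENNReal.ofReal (cP j k) + orH ρ Q cF cP k L'' Q := min_le_right _ _
        _ ≤ ENNReal.ofReal (cF j) +
            min (orH ρ Q cF cP k L'' r') (ENNReal.ofReal (cP j k) + orH ρ Q cF cP k L'' Q) :=
            add_le_add (hcPF j k) hHQ
    rw [orH_eq, orH_eq]
    refine ENNReal.tsum_le_tsum fun s => mul_le_mul_left ?_ _
    have hk21 : psi Q s b ≤ psi Q s a := psi_anti hab
    have hk12 : psi Q s a ≤ psi Q s b + 1 := psi_step hQ (by omega)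
    have hrb : psi Q s b * Q + b - s ≤ Q := resid_le hQ hb
    have hra : psi Q s a * Q + a - s ≤ Q := resid_le hQ ha
    rcases (by omega : psi Q s a = psi Q s b ∨ psi Q s a = psi Q s b + 1) with hcase | hcase
    · rw [hcase]
      refine add_le_add le_rfl (Fmono ?_ hrb)
      exact Nat.sub_le_sub_right (Nat.add_le_add_left hab _) _
    · rw [hcase] at hra
      rw [hcase]
      push_cast
      rw [mul_add, mul_one]
      calc ENNReal.ofReal (cF j) * (psi Q s b : ℝ≥0∞) +
            orF ρ Q cF cP j (k :: L'') (psi Q s b * Q + b - s)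
          ≤ ENNReal.ofReal (cF j) * (psi Q s b : ℝ≥0∞) +
            (ENNReal.ofReal (cF j) + orF ρ Q cF cP j (k :: L'') ((psi Q s b + 1) * Q + a - s)) :=
            add_le_add le_rfl (Fjump hra)
        _ = ENNReal.ofReal (cF j) * (psi Q s b : ℝ≥0∞) + ENNReal.ofReal (cF j) +
            orF ρ Q cF cP j (k :: L'') ((psi Q s b + 1) * Q + a - s) := by ring
end

section
variable {N : Type*} (ρ : N → PMF ℕ) (Q : ℕ) (cF : N → ℝ) (cP : N → N → ℝ)

lemma sa_F (hQ : 1 ≤ Q)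
    (hcPF : ∀ j k, ENNReal.ofReal (cP j k) ≤ ENNReal.ofReal (cF j)) (L2 : List N) :
    ∀ (L1 : List N) (i : N) (q : ℕ), q ≤ Q →
      orF ρ Q cF cP i L1 q + QbarOR ρ Q cF cP L2 ≤ orF ρ Q cF cP i (L1 ++ L2) q := by
  intro L1
  induction L1 with
  | nil =>
    intro i q hq
    rw [List.nil_append]
    show orF ρ Q cF cP i [] q + _ ≤ _
    rw [show orF ρ Q cF cP i [] q = 0 from rfl, zero_add]
    cases L2 with
    | nil => exact le_rfl
    | cons k L2' =>
      rw [orF_cons]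
      exact le_min (orH_mono ρ Q cF cP hQ hcPF L2' k hq le_rfl) le_add_self
  | cons j L1' ih =>
    intro i q hq
    have hsaH : ∀ x, x ≤ Q →
        orH ρ Q cF cP j L1' x + QbarOR ρ Q cF cP L2 ≤ orH ρ Q cF cP j (L1' ++ L2) x := by
      intro x hx
      rw [orH_eq, orH_eq, ← pmf_tsum_add_const (ρ j)
        (fun s => ENNReal.ofReal (cF j) * (psi Q s x : ℝ≥0∞)
          + orF ρ Q cF cP j L1' (psi Q s x * Q + x - s)) (QbarOR ρ Q cF cP L2)]
      refine ENNReal.tsum_le_tsum fun s => mul_le_mul_left ?_ _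
      rw [add_assoc]
      exact add_le_add le_rfl (ih j _ (resid_le hQ hx))
    rw [List.cons_append, orF_cons, orF_cons]
    refine le_min ?_ ?_
    · exact le_trans (add_le_add_left (min_le_left _ _) _) (hsaH q hq)
    · calc min (orH ρ Q cF cP j L1' q)
            (ENNReal.ofReal (cP i j) + orH ρ Q cF cP j L1' Q) + QbarOR ρ Q cF cP L2
          ≤ ENNReal.ofReal (cP i j) + orH ρ Q cF cP j L1' Q + QbarOR ρ Q cF cP L2 :=
            add_le_add_left (min_le_right _ _) _
        _ = ENNReal.ofReal (cP i j) + (orH ρ Q cF cP j L1' Q + QbarOR ρ Q cF cP L2) := by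
            rw [add_assoc]
        _ ≤ ENNReal.ofReal (cP i j) + orH ρ Q cF cP j (L1' ++ L2) Q :=
            add_le_add_right (hsaH Q le_rfl) _

lemma sa_Qbar (hQ : 1 ≤ Q)
    (hcPF : ∀ j k, ENNReal.ofReal (cP j k) ≤ ENNReal.ofReal (cF j)) (p1 p2 : List N) :
    QbarOR ρ Q cF cP p1 + QbarOR ρ Q cF cP p2 ≤ QbarOR ρ Q cF cP (p1 ++ p2) := by
  cases p1 with
  | nil => rw [List.nil_append]; rw [show QbarOR ρ Q cF cP ([] : List N) = 0 from rfl, zero_add]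
  | cons j p1' =>
    rw [List.cons_append]
    show orH ρ Q cF cP j p1' Q + _ ≤ orH ρ Q cF cP j (p1' ++ p2) Q
    have hsaH : ∀ x, x ≤ Q →
        orH ρ Q cF cP j p1' x + QbarOR ρ Q cF cP p2 ≤ orH ρ Q cF cP j (p1' ++ p2) x := by
      intro x hx
      rw [orH_eq, orH_eq, ← pmf_tsum_add_const (ρ j)
        (fun s => ENNReal.ofReal (cF j) * (psi Q s x : ℝ≥0∞)
          + orF ρ Q cF cP j p1' (psi Q s x * Q + x - s)) (QbarOR ρ Q cF cP p2)]
      refine ENNReal.tsum_le_tsum fun s => mul_le_mul_left ?_ _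
      rw [add_assoc]
      exact add_le_add le_rfl (sa_F ρ Q cF cP hQ hcPF p2 p1' j _ (resid_le hQ hx))
    exact hsaH Q le_rfl
end

/-- the OR recourse function is superadditive under concatenation, both for
the fixed-orientation cost `Q̄ᴼᴿ` and consequently for the best-orientation cost `Qᴼᴿ`. -/
theorem or_superadditive
    {N : Type*} (ρ : N → PMF ℕ) (Q : ℕ) (hQ : 1 ≤ Q)
    (hmean : ∀ i, ∑' s : ℕ, (s : ℝ≥0∞) * ρ i s ≠ ⊤)
    (bP bF : ℝ) (hbP : 0 ≤ bP) (hbPF : bP ≤ bF)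
    (c0 : N → ℝ) (c : N → N → ℝ)
    (hc0 : ∀ i, 0 ≤ c0 i) (hc : ∀ i j, 0 ≤ c i j) (hsymm : ∀ i j, c i j = c j i)
    (htri1 : ∀ i j, c0 j ≤ c0 i + c i j)
    (htri2 : ∀ i j, c i j ≤ c0 i + c0 j)
    (htri3 : ∀ i j k, c i k ≤ c i j + c j k)
    (p1 p2 : List N) (hp : (p1 ++ p2).Nodup) :
    QbarOR ρ Q (fun a => bF + 2 * c0 a) (fun a b => bP + c0 a + c0 b - c a b) p1
        + QbarOR ρ Q (fun a => bF + 2 * c0 a) (fun a b => bP + c0 a + c0 b - c a b) p2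
      ≤ QbarOR ρ Q (fun a => bF + 2 * c0 a) (fun a b => bP + c0 a + c0 b - c a b) (p1 ++ p2) ∧
    QOR ρ Q (fun a => bF + 2 * c0 a) (fun a b => bP + c0 a + c0 b - c a b) p1
        + QOR ρ Q (fun a => bF + 2 * c0 a) (fun a b => bP + c0 a + c0 b - c a b) p2
      ≤ QOR ρ Q (fun a => bF + 2 * c0 a) (fun a b => bP + c0 a + c0 b - c a b) (p1 ++ p2) := by
  set cF : N → ℝ := fun a => bF + 2 * c0 a with hcF
  set cP : N → N → ℝ := fun a b => bP + c0 a + c0 b - c a b with hcP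
  have hcPF : ∀ j k, ENNReal.ofReal (cP j k) ≤ ENNReal.ofReal (cF j) := by
    intro j k
    apply ENNReal.ofReal_le_ofReal
    have := htri1 j k
    simp only [hcF, hcP]
    linarith
  have h1 := sa_Qbar ρ Q cF cP hQ hcPF p1 p2
  have h2 := sa_Qbar ρ Q cF cP hQ hcPF p2.reverse p1.reverse
  refine ⟨h1, ?_⟩
  unfold QOR
  rw [List.reverse_append]
  refine le_min ?_ ?_
  · exact le_trans (add_le_add (min_le_left _ _) (min_le_left _ _)) h1
  · refine le_trans (add_le_add (min_le_right _ _) (min_le_right _ _)) ?_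
    rw [add_comm]
    exact h2
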